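/- Let X be a Noetherian topological space, let U ⊆ X be an open subset, and let Φ : U → X be a continuous map. Let x ∈ X be such that the n-th iterate Φⁿ(x) is defined and lies in U for every nonnegative integer n. Then for each closed subset Y ⊆ X, the set S = { n ∈ ℕ : Φⁿ(x) ∈ Y } is a union of at most finitely many arithmetic progressions together with a set of Banach density zero. -/

import Mathlib

/-!
Restricted to the points whose whole orbit stays in `U`, `Φ` is a continuous self-map of a
Noetherian space, so we may take `U = X`. By Noetherianity some orbit closure of `Φ^[a] x`
under `Φ^[d]`, `d ≥ 1`, is minimal among all of these; then every arithmetic subprogression of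
that orbit has the same closure, and so has every later point `Φ^[t] x`.
For a residue class `t` mod `d`, either this closure lies in `Y`, and the whole class lies in the
return set, or the returns of the class have Banach density zero. Otherwise pick a set `T` of
returns of positive density whose orbit points have minimal closure `V ⊆ Y`. Some gap `e ≥ 1`
has `T ∩ (T - e)` of positive density, which by minimality also has closure `V`; by continuity
`Φ^[d e]` maps `V` into itself, so the progression of step `e` through a point of `T` stays in
`V`, and its closure, the whole orbit closure of the class, lies in `Y`.
-/

/-- The Banach (upper) density of a set of natural numbers: the `limsup`, as the interval
length `n` tends to infinity, of the largest proportion `|S ∩ I| / |I|` over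
intervals `I` of natural numbers of length `n`. -/
noncomputable def banachDensity (S : Set ℕ) : ℝ :=
  Filter.limsup (fun n : ℕ => ⨆ a : ℕ, ((S ∩ Set.Ico a (a + n)).ncard : ℝ) / n) Filter.atTop

open Filter Topology Set

noncomputable def windowDensity (S : Set ℕ) (n : ℕ) : ℝ :=
  ⨆ a : ℕ, ((S ∩ Ico a (a + n)).ncard : ℝ) / n

lemma banachDensity_eq_limsup (S : Set ℕ) :
    banachDensity S = limsup (windowDensity S) atTop := rfl

lemma ncard_inter_Ico_div_le_one (S : Set ℕ) (a n : ℕ) :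
    ((S ∩ Ico a (a + n)).ncard : ℝ) / n ≤ 1 :=
  div_le_one_of_le₀
    (Nat.cast_le.2 <| (ncard_le_ncard inter_subset_right (finite_Ico _ _)).trans (by simp))
    n.cast_nonneg

lemma bddAbove_range_window (S : Set ℕ) (n : ℕ) :
    BddAbove (range fun a : ℕ => ((S ∩ Ico a (a + n)).ncard : ℝ) / n) :=
  ⟨1, forall_mem_range.2 fun a => ncard_inter_Ico_div_le_one S a n⟩

lemma le_windowDensity (S : Set ℕ) (a n : ℕ) :
    ((S ∩ Ico a (a + n)).ncard : ℝ) / n ≤ windowDensity S n :=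
  le_ciSup (bddAbove_range_window S n) a

lemma windowDensity_nonneg (S : Set ℕ) (n : ℕ) : 0 ≤ windowDensity S n :=
  (by positivity : (0 : ℝ) ≤ _).trans (le_windowDensity S 0 n)

lemma isBoundedUnder_windowDensity (S : Set ℕ) :
    IsBoundedUnder (· ≤ ·) atTop (windowDensity S) :=
  isBoundedUnder_of ⟨1, fun n => ciSup_le fun a => ncard_inter_Ico_div_le_one S a n⟩

lemma isCoboundedUnder_windowDensity (S : Set ℕ) :
    IsCoboundedUnder (· ≤ ·) atTop (windowDensity S) :=
  (isBoundedUnder_of ⟨0, windowDensity_nonneg S⟩ :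
    IsBoundedUnder (· ≥ ·) atTop (windowDensity S)).isCoboundedUnder_le

lemma banachDensity_nonneg (S : Set ℕ) : 0 ≤ banachDensity S :=
  le_limsup_of_frequently_le (Frequently.of_forall (windowDensity_nonneg S))
    (isBoundedUnder_windowDensity S)

lemma banachDensity_le_of_ncard_le {A B : Set ℕ}
    (h : ∀ a n, ∃ b, (A ∩ Ico a (a + n)).ncard ≤ (B ∩ Ico b (b + n)).ncard) :
    banachDensity A ≤ banachDensity B :=
  limsup_le_limsup (Eventually.of_forall fun n => ciSup_le fun a => by
      obtain ⟨b, hb⟩ := h a n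
      exact (div_le_div_of_nonneg_right (by exact_mod_cast hb) n.cast_nonneg).trans
        (le_windowDensity B b n))
    (isCoboundedUnder_windowDensity A) (isBoundedUnder_windowDensity B)

lemma banachDensity_mono {A B : Set ℕ} (h : A ⊆ B) : banachDensity A ≤ banachDensity B :=
  banachDensity_le_of_ncard_le fun a _ =>
    ⟨a, ncard_le_ncard (inter_subset_inter_left _ h) ((finite_Ico _ _).inter_of_right _)⟩

lemma banachDensity_empty : banachDensity ∅ = 0 := by
  simp [banachDensity]

lemma Set.Nonempty.of_banachDensity_pos {S : Set ℕ} (h : 0 < banachDensity S) : S.Nonempty :=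
  nonempty_iff_ne_empty.2 fun hS => by simp [hS, banachDensity_empty] at h

lemma banachDensity_union_le (A B : Set ℕ) :
    banachDensity (A ∪ B) ≤ banachDensity A + banachDensity B := by
  have hwindow : ∀ n, windowDensity (A ∪ B) n ≤ windowDensity A n + windowDensity B n :=
    fun n => ciSup_le fun a => by
      have hcount : (((A ∪ B) ∩ Ico a (a + n)).ncard : ℝ)
          ≤ (A ∩ Ico a (a + n)).ncard + (B ∩ Ico a (a + n)).ncard := by
        rw [union_inter_distrib_right]
        exact_mod_cast ncard_union_le _ _
      calc (((A ∪ B) ∩ Ico a (a + n)).ncard : ℝ) / n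
          ≤ ((A ∩ Ico a (a + n)).ncard + (B ∩ Ico a (a + n)).ncard : ℝ) / n :=
            div_le_div_of_nonneg_right hcount n.cast_nonneg
        _ = (A ∩ Ico a (a + n)).ncard / n + (B ∩ Ico a (a + n)).ncard / n := add_div _ _ _
        _ ≤ windowDensity A n + windowDensity B n :=
            add_le_add (le_windowDensity A a n) (le_windowDensity B a n)
  refine le_of_forall_pos_le_add fun ε hε => ?_
  have hA : ∀ᶠ n in atTop, windowDensity A n < banachDensity A + ε / 2 :=
    eventually_lt_of_limsup_lt (by linarith [banachDensity_eq_limsup A])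
      (isBoundedUnder_windowDensity A)
  have hB : ∀ᶠ n in atTop, windowDensity B n < banachDensity B + ε / 2 :=
    eventually_lt_of_limsup_lt (by linarith [banachDensity_eq_limsup B])
      (isBoundedUnder_windowDensity B)
  rw [banachDensity_eq_limsup]
  refine limsup_le_of_le (isCoboundedUnder_windowDensity _) ?_
  filter_upwards [hA, hB] with n hAn hBn
  linarith [hwindow n]

lemma banachDensity_union_eq_left {A N : Set ℕ} (hN : banachDensity N = 0) :
    banachDensity (A ∪ N) = banachDensity A :=
  le_antisymm ((banachDensity_union_le A N).trans_eq (by rw [hN, add_zero]))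
    (banachDensity_mono subset_union_left)

lemma banachDensity_biUnion_eq_zero {ι : Type*} (s : Finset ι) {A : ι → Set ℕ}
    (h : ∀ i ∈ s, banachDensity (A i) = 0) : banachDensity (⋃ i ∈ s, A i) = 0 := by
  classical
  induction s using Finset.induction with
  | empty => simpa using banachDensity_empty
  | insert i s _ ih =>
    rw [Finset.set_biUnion_insert, union_comm,
      banachDensity_union_eq_left (h i (Finset.mem_insert_self i s))]
    exact ih fun j hj => h j (Finset.mem_insert_of_mem hj)

lemma ncard_inter_Ico_le_of_separated {G : Set ℕ} {D : ℕ}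
    (hG : ∀ m ∈ G, ∀ m' ∈ G, m < m' → m + D < m') (a n : ℕ) :
    (G ∩ Ico a (a + n)).ncard ≤ n / (D + 1) + 1 := by
  have hblock : ∀ g ∈ G ∩ Ico a (a + n), (g - a) / (D + 1) ∈ Iio (n / (D + 1) + 1) :=
    fun g hg => Nat.lt_succ_of_le (Nat.div_le_div_right (by grind))
  have hinj : InjOn (fun g => (g - a) / (D + 1)) (G ∩ Ico a (a + n)) := by
    intro g₁ h₁ g₂ h₂ heq
    have hq₁ := Nat.div_add_mod (g₁ - a) (D + 1)
    have hq₂ := Nat.div_add_mod (g₂ - a) (D + 1)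
    have hr₁ := Nat.mod_lt (g₁ - a) D.succ_pos
    have hr₂ := Nat.mod_lt (g₂ - a) D.succ_pos
    simp only at heq
    rw [heq] at hq₁
    rcases lt_trichotomy g₁ g₂ with hlt | heq' | hgt
    · have := hG g₁ h₁.1 g₂ h₂.1 hlt; grind
    · exact heq'
    · have := hG g₂ h₂.1 g₁ h₁.1 hgt; grind
  simpa using ncard_le_ncard_of_injOn _ hblock hinj

lemma banachDensity_le_of_separated {G : Set ℕ} {D : ℕ}
    (hG : ∀ m ∈ G, ∀ m' ∈ G, m < m' → m + D < m') :
    banachDensity G ≤ ((D : ℝ) + 1)⁻¹ := by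
  have hlim : Tendsto (fun n : ℕ => ((D : ℝ) + 1)⁻¹ + 1 / n) atTop (𝓝 ((D : ℝ) + 1)⁻¹) := by
    simpa using
      (tendsto_const_nhds (x := ((D : ℝ) + 1)⁻¹)).add tendsto_one_div_atTop_nhds_zero_nat
  rw [← hlim.limsup_eq]
  refine limsup_le_limsup ?_ (isCoboundedUnder_windowDensity G) hlim.isBoundedUnder_le
  filter_upwards [eventually_gt_atTop 0] with n hn
  refine ciSup_le fun a => ?_
  have hcount : ((G ∩ Ico a (a + n)).ncard : ℝ) ≤ n / ((D : ℝ) + 1) + 1 := by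
    have := Nat.cast_div_le (α := ℝ) (m := n) (n := D + 1)
    push_cast at this
    exact (Nat.cast_le.2 (ncard_inter_Ico_le_of_separated hG a n)).trans
      (by push_cast; linarith)
  calc ((G ∩ Ico a (a + n)).ncard : ℝ) / n ≤ (n / ((D : ℝ) + 1) + 1) / n :=
        div_le_div_of_nonneg_right hcount n.cast_nonneg
    _ = ((D : ℝ) + 1)⁻¹ + 1 / n := by field_simp

lemma exists_banachDensity_inter_preimage_add_pos {T : Set ℕ} (hT : 0 < banachDensity T) :
    ∃ e, 0 < e ∧ 0 < banachDensity (T ∩ (· + e) ⁻¹' T) := by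
  obtain ⟨D, hD⟩ := exists_nat_one_div_lt hT
  by_contra! hnull
  have hzero : ∀ e ∈ Finset.Icc 1 D, banachDensity (T ∩ (· + e) ⁻¹' T) = 0 := fun e he =>
    le_antisymm (hnull e (Finset.mem_Icc.1 he).1) (banachDensity_nonneg _)
  set G := {n ∈ T | ∀ e ∈ Finset.Icc 1 D, n + e ∉ T}
  have hG : ∀ m ∈ G, ∀ m' ∈ G, m < m' → m + D < m' := by
    intro m hm m' hm' hlt
    by_contra! hle
    refine hm.2 (m' - m) (Finset.mem_Icc.2 ⟨by omega, by omega⟩) ?_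
    rw [Nat.add_sub_cancel' hlt.le]
    exact hm'.1
  have hcover : T ⊆ G ∪ ⋃ e ∈ Finset.Icc 1 D, T ∩ (· + e) ⁻¹' T := by
    intro n hn
    by_cases hg : ∃ e ∈ Finset.Icc 1 D, n + e ∈ T
    · obtain ⟨e, he, heT⟩ := hg
      exact Or.inr (mem_biUnion he ⟨hn, heT⟩)
    · exact Or.inl ⟨hn, fun e he heT => hg ⟨e, he, heT⟩⟩
  have hTG := (banachDensity_mono hcover).trans_eq
    (banachDensity_union_eq_left (banachDensity_biUnion_eq_zero _ hzero))
  have hGD := banachDensity_le_of_separated hG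
  rw [one_div] at hD
  linarith

lemma banachDensity_image_affine_le (R : Set ℕ) (b : ℕ) {d : ℕ} (hd : 0 < d) :
    banachDensity ((fun k => b + d * k) '' R) ≤ banachDensity R := by
  refine banachDensity_le_of_ncard_le fun a n => ?_
  set K := R ∩ (fun k => b + d * k) ⁻¹' Ico a (a + n)
  have hinj : InjOn (fun k => b + d * k) K := fun p _ q _ h =>
    Nat.eq_of_mul_eq_mul_left hd (Nat.add_left_cancel h)
  rw [← image_inter_preimage, hinj.ncard_image]
  rcases K.eq_empty_or_nonempty with hK | hK
  · exact ⟨0, by simp [hK]⟩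
  -- all indices in `K` lie within `n` of the least one, since `d ≥ 1`
  refine ⟨sInf K, ncard_le_ncard (fun k hk => ⟨hk.1, Nat.sInf_le hk, ?_⟩)
    ((finite_Ico _ _).inter_of_right _)⟩
  have hmin := (Nat.sInf_mem hK).2
  have hk₀ : sInf K ≤ k := Nat.sInf_le hk
  have hspread : d * (k - sInf K) + d * sInf K = d * k := by
    rw [← Nat.mul_add, Nat.sub_add_cancel hk₀]
  have hstretch := Nat.le_mul_of_pos_left (k - sInf K) hd
  have hkK := hk.2
  simp only [mem_preimage, mem_Ico] at hmin hkK
  omega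

lemma exists_progressions_union_null_of_residues {S : Set ℕ} {n₁ ρ : ℕ} (hρ : 0 < ρ)
    (h : ∀ t ∈ Ico n₁ (n₁ + ρ),
      (∀ k, t + ρ * k ∈ S) ∨ banachDensity {k | t + ρ * k ∈ S} = 0) :
    ∃ (F : Finset (ℕ × ℕ)) (Z : Set ℕ), banachDensity Z = 0 ∧
      S = (⋃ p ∈ F, {m : ℕ | ∃ n : ℕ, m = p.1 + n * p.2}) ∪ Z := by
  classical
  set residues := Finset.Ico n₁ (n₁ + ρ)
  set good := residues.filter fun t => ∀ k, t + ρ * k ∈ S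
  refine ⟨((Finset.range n₁).filter (· ∈ S)).image (·, 0) ∪ good.image (·, ρ),
    ⋃ t ∈ residues \ good, (fun k => t + ρ * k) '' {k | t + ρ * k ∈ S}, ?_, ?_⟩
  · refine banachDensity_biUnion_eq_zero _ fun t ht => le_antisymm ?_ (banachDensity_nonneg _)
    obtain ⟨hres, hbad⟩ := Finset.mem_sdiff.1 ht
    have hnull := (h t (by simpa [residues] using hres)).resolve_left
      fun hall => hbad (Finset.mem_filter.2 ⟨hres, hall⟩)
    exact (banachDensity_image_affine_le _ t hρ).trans_eq hnull
  ext n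
  simp only [mem_union, mem_iUnion, Finset.mem_union, Finset.mem_image, Finset.mem_filter,
    Finset.mem_range, Finset.mem_sdiff, mem_ofPred_eq, mem_image, exists_prop]
  constructor
  · intro hn
    by_cases hhead : n < n₁
    · exact Or.inl ⟨(n, 0), Or.inl ⟨n, ⟨hhead, hn⟩, rfl⟩, 0, by simp⟩
    have hdiv := Nat.mod_add_div (n - n₁) ρ
    have hmod := Nat.mod_lt (n - n₁) hρ
    obtain ⟨t, q, hres, rfl⟩ : ∃ t q, t ∈ residues ∧ n = t + ρ * q :=
      ⟨n₁ + (n - n₁) % ρ, (n - n₁) / ρ, Finset.mem_Ico.2 ⟨by omega, by omega⟩, by omega⟩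
    by_cases hgood : t ∈ good
    · exact Or.inl ⟨(t, ρ), Or.inr ⟨t, hgood, rfl⟩, q, by rw [mul_comm]⟩
    · exact Or.inr ⟨t, ⟨hres, hgood⟩, q, hn, rfl⟩
  · rintro (⟨p, (⟨s, ⟨-, hs⟩, rfl⟩ | ⟨t, hgood, rfl⟩), k, rfl⟩ | ⟨t, -, k, hk, rfl⟩)
    · simpa using hs
    · rw [mul_comm]; exact (Finset.mem_filter.1 hgood).2 k
    · exact hk

section OrbitClosure

open TopologicalSpace Function

variable {X : Type*} [TopologicalSpace X]

def orbitClosure (g : X → X) (y : X) : Set X := closure (range fun n => g^[n] y)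

def SubprogressionDense (g : X → X) (y : X) : Prop :=
  ∀ e k, 0 < e → orbitClosure (g^[e]) (g^[k] y) = orbitClosure g y

lemma TopologicalSpace.NoetherianSpace.exists_minimal_isClosed [NoetherianSpace X]
    {ι : Type*} [Nonempty ι] (F : ι → Set X) (hF : ∀ i, IsClosed (F i)) :
    ∃ i, ∀ j, F j ⊆ F i → F j = F i := by
  obtain ⟨_, ⟨i, rfl⟩, hmin⟩ := (wellFounded_lt (α := Closeds X)).has_min
    (Set.range fun i => ⟨F i, hF i⟩) (Set.range_nonempty _)
  exact ⟨i, fun j hj => congrArg SetLike.coe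
    (eq_of_le_of_not_lt (α := Closeds X) hj (hmin _ (Set.mem_range_self j)))⟩

lemma orbitClosure_iterate_subset (g : X → X) (y : X) (e k : ℕ) :
    orbitClosure (g^[e]) (g^[k] y) ⊆ orbitClosure g y :=
  closure_mono <| range_subset_iff.2 fun n => ⟨e * n + k, by
    simp only [iterate_add_apply, iterate_mul]⟩

lemma exists_subprogressionDense [NoetherianSpace X] (g : X → X) (y : X) :
    ∃ d a, 0 < d ∧ SubprogressionDense (g^[d]) (g^[a] y) := by
  have : Nonempty {p : ℕ × ℕ // 0 < p.1} := ⟨⟨(1, 0), one_pos⟩⟩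
  obtain ⟨⟨⟨d, a⟩, hd⟩, hmin⟩ := NoetherianSpace.exists_minimal_isClosed
    (ι := {p : ℕ × ℕ // 0 < p.1}) (fun p => orbitClosure (g^[p.1.1]) (g^[p.1.2] y))
    (fun _ => isClosed_closure)
  refine ⟨d, a, hd, fun e k he => ?_⟩
  have hsub := hmin ⟨(d * e, d * k + a), Nat.mul_pos hd he⟩
  rw [iterate_mul, iterate_add_apply, iterate_mul] at hsub
  exact hsub (orbitClosure_iterate_subset _ _ e k)

lemma orbitClosure_apply {g h : X → X} (hh : Continuous h) (hc : Function.Commute h g) (y : X) :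
    orbitClosure g (h y) = closure (h '' orbitClosure g y) := by
  rw [orbitClosure, orbitClosure, closure_image_closure hh, ← range_comp]
  congr 2
  funext n
  exact ((hc.iterate_right n).eq y).symm

lemma SubprogressionDense.apply {g h : X → X} {y : X} (hy : SubprogressionDense g y)
    (hh : Continuous h) (hc : Function.Commute h g) : SubprogressionDense g (h y) := by
  intro e k he
  rw [← (hc.iterate_right k).eq, orbitClosure_apply hh (hc.iterate_right e),
    orbitClosure_apply hh hc, hy e k he]

lemma SubprogressionDense.banachDensity_eq_zero [NoetherianSpace X] {g : X → X} {y : X}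
    (hy : SubprogressionDense g y) (hg : Continuous g) {Y : Set X} (hY : IsClosed Y)
    (hnot : ¬ orbitClosure g y ⊆ Y) : banachDensity {k | g^[k] y ∈ Y} = 0 := by
  by_contra hne
  have hpos := lt_of_le_of_ne (banachDensity_nonneg _) (Ne.symm hne)
  set u : ℕ → X := fun k => g^[k] y
  have : Nonempty {T : Set ℕ // T ⊆ u ⁻¹' Y ∧ 0 < banachDensity T} := ⟨⟨_, subset_rfl, hpos⟩⟩
  obtain ⟨⟨T, hTY, hTpos⟩, hmin⟩ := NoetherianSpace.exists_minimal_isClosed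
    (fun T : {T : Set ℕ // T ⊆ u ⁻¹' Y ∧ 0 < banachDensity T} => closure (u '' T.1))
    (fun _ => isClosed_closure)
  obtain ⟨e, he, hA⟩ := exists_banachDensity_inter_preimage_add_pos hTpos
  set A := T ∩ (· + e) ⁻¹' T
  have hAT : closure (u '' A) = closure (u '' T) :=
    hmin ⟨A, inter_subset_left.trans hTY, hA⟩ (closure_mono (image_mono inter_subset_left))
  have hmaps : MapsTo (g^[e]) (closure (u '' T)) (closure (u '' T)) := by
    intro z hz
    rw [← hAT] at hz
    refine closure_mono ?_ (image_closure_subset_closure_image (hg.iterate e) ⟨z, hz, rfl⟩)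
    rintro _ ⟨_, ⟨k, hk, rfl⟩, rfl⟩
    exact ⟨k + e, hk.2, by simp only [u, ← iterate_add_apply, add_comm]⟩
  obtain ⟨α, hα⟩ := Set.Nonempty.of_banachDensity_pos hA
  have horbit : orbitClosure (g^[e]) (g^[α] y) ⊆ closure (u '' T) :=
    closure_minimal (range_subset_iff.2 fun j =>
      hmaps.iterate j (subset_closure ⟨α, hα.1, rfl⟩)) isClosed_closure
  exact hnot ((hy e α he).symm.subset.trans
    (horbit.trans (closure_minimal (image_subset_iff.2 hTY) hY)))

end OrbitClosure

open TopologicalSpace Function in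
theorem exists_progressions_union_null_of_continuous {X : Type*} [TopologicalSpace X]
    [NoetherianSpace X] {f : X → X} (hf : Continuous f) (x : X) {Y : Set X} (hY : IsClosed Y) :
    ∃ (F : Finset (ℕ × ℕ)) (Z : Set ℕ), banachDensity Z = 0 ∧
      {n : ℕ | f^[n] x ∈ Y} = (⋃ p ∈ F, {m : ℕ | ∃ n : ℕ, m = p.1 + n * p.2}) ∪ Z := by
  obtain ⟨d, a, hd, hdense⟩ := exists_subprogressionDense f x
  refine exists_progressions_union_null_of_residues (n₁ := a) hd fun t ht => ?_
  have hclass : ∀ k, (f^[d])^[k] (f^[t] x) = f^[t + d * k] x := fun k => by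
    rw [← iterate_mul, ← iterate_add_apply, add_comm]
  have htdense : SubprogressionDense (f^[d]) (f^[t] x) := by
    have := hdense.apply (hf.iterate (t - a)) (Commute.iterate_iterate_self f _ _)
    rwa [← iterate_add_apply, Nat.sub_add_cancel ht.1] at this
  by_cases hsub : orbitClosure (f^[d]) (f^[t] x) ⊆ Y
  · exact Or.inl fun k => show f^[t + d * k] x ∈ Y from
      hclass k ▸ hsub (subset_closure (mem_range_self k))
  · have hnull := htdense.banachDensity_eq_zero (hf.iterate d) hY hsub
    simp only [hclass] at hnull
    exact Or.inr hnull

theorem stmt_8_general {X : Type*} [TopologicalSpace X] [TopologicalSpace.NoetherianSpace X]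
    (U : Set X) (Φ : X → X) (hΦ : ContinuousOn Φ U)
    (x : X) (hx : ∀ n : ℕ, Φ^[n] x ∈ U) (Y : Set X) (hY : IsClosed Y) :
    ∃ (F : Finset (ℕ × ℕ)) (Z : Set ℕ), banachDensity Z = 0 ∧
      {n : ℕ | Φ^[n] x ∈ Y} =
        (⋃ p ∈ F, {m : ℕ | ∃ n : ℕ, m = p.1 + n * p.2}) ∪ Z := by
  let W : Set X := {y | ∀ n, Φ^[n] y ∈ U}
  let ΦW : W → W := fun y =>
    ⟨Φ y, fun n => by simpa only [Function.iterate_succ_apply] using y.2 (n + 1)⟩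
  have hΦW : Continuous ΦW :=
    (hΦ.comp_continuous continuous_subtype_val fun y : W => y.2 0).subtype_mk _
  have horbit : ∀ n (y : W), (ΦW^[n] y : X) = Φ^[n] y :=
    Function.Semiconj.iterate_right (f := Subtype.val) (fun _ => rfl)
  simpa only [mem_preimage, horbit] using
    exists_progressions_union_null_of_continuous hΦW ⟨x, hx⟩ (hY.preimage continuous_subtype_val)

theorem stmt_8 {X : Type*} [TopologicalSpace X] [TopologicalSpace.NoetherianSpace X]
    (U : Set X) (hU : IsOpen U) (Φ : X → X) (hΦ : ContinuousOn Φ U)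
    (x : X) (hx : ∀ n : ℕ, Φ^[n] x ∈ U) (Y : Set X) (hY : IsClosed Y) :
    ∃ (F : Finset (ℕ × ℕ)) (Z : Set ℕ), banachDensity Z = 0 ∧
      {n : ℕ | Φ^[n] x ∈ Y} =
        (⋃ p ∈ F, {m : ℕ | ∃ n : ℕ, m = p.1 + n * p.2}) ∪ Z :=
  stmt_8_general U Φ hΦ x hx Y hY
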